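/- arXiv:1605.07394 — 6 statements merged into one kernel-verified Lean document; each statement's English description precedes it below -/
import Mathlib

section
/- If w : (0,∞) → ℝ is a positive C² solution of w'' + ((n-1)/r + r/2) w' + w/(p-1) + w^p = 0 with n > 2 and p > 1, then w is nonincreasing, i.e. w'(r) ≤ 0 for all r > 0. -/
/-!
The weight `A(r) = r^(n-1) e^(r²/4)` is an integrating factor:
`(A w')' = A (w'' + ((n-1)/r + r/2) w') = -A (w/(p-1) + w^p) < 0`, so `A w'` is nonincreasing.
If `w'(r₀) > 0`, then `w' ≥ c r^(1-n)` on `(0, r₀)` for some `c > 0`; since `n > 2`, integrating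
this from `r` to `r₀` forces `w(r) → -∞` as `r → 0⁺`, contradicting `w > 0`.
-/

open Set Filter Topology Real

noncomputable def radialWeight (n r : ℝ) : ℝ := r ^ (n - 1) * exp (r ^ 2 / 4)

lemma radialWeight_pos (n : ℝ) {r : ℝ} (hr : 0 < r) : 0 < radialWeight n r :=
  mul_pos (rpow_pos_of_pos hr _) (exp_pos _)

lemma hasDerivAt_radialWeight (n : ℝ) {r : ℝ} (hr : 0 < r) :
    HasDerivAt (radialWeight n) (radialWeight n r * ((n - 1) / r + r / 2)) r := by
  have hpow := hasDerivAt_rpow_const (p := n - 1) (Or.inl hr.ne')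
  have hexp := ((hasDerivAt_pow 2 r).div_const 4).exp
  refine (hpow.mul hexp).congr_deriv ?_
  rw [rpow_sub_one hr.ne', radialWeight]
  field_simp
  ring

lemma antitoneOn_radialWeight_mul_deriv {n : ℝ} {w : ℝ → ℝ} (hw : ContDiffOn ℝ 2 w (Ioi 0))
    (hsign : ∀ r > 0, deriv (deriv w) r + ((n - 1) / r + r / 2) * deriv w r ≤ 0) :
    AntitoneOn (fun r => radialWeight n r * deriv w r) (Ioi 0) := by
  have hw' : DifferentiableOn ℝ (deriv w) (Ioi 0) :=
    (hw.deriv_of_isOpen isOpen_Ioi (m := 1) (by norm_num)).differentiableOn (by norm_num)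
  have hderiv : ∀ r > 0, HasDerivAt (fun r => radialWeight n r * deriv w r)
      (radialWeight n r * (deriv (deriv w) r + ((n - 1) / r + r / 2) * deriv w r)) r :=
    fun r hr => ((hasDerivAt_radialWeight n hr).mul
      (hw'.differentiableAt (Ioi_mem_nhds hr)).hasDerivAt).congr_deriv (by ring)
  refine antitoneOn_of_deriv_nonpos (convex_Ioi 0)
    (fun r hr => (hderiv r hr).continuousAt.continuousWithinAt)
    (fun r hr => (hderiv r (interior_subset hr)).differentiableAt.differentiableWithinAt)
    fun r hr => ?_
  rw [interior_Ioi] at hr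
  rw [(hderiv r hr).deriv]
  exact mul_nonpos_of_nonneg_of_nonpos (radialWeight_pos n hr).le (hsign r hr)

lemma exists_pos_mul_rpow_le_of_antitoneOn {n r₀ : ℝ} {f : ℝ → ℝ} (hr₀ : 0 < r₀)
    (hanti : AntitoneOn (fun r => radialWeight n r * f r) (Ioi 0)) (hf : 0 < f r₀) :
    ∃ c > 0, ∀ r ∈ Ioo 0 r₀, c * r ^ (-(n - 1)) ≤ f r := by
  refine ⟨radialWeight n r₀ * f r₀ * exp (-(r₀ ^ 2 / 4)),
    by have := radialWeight_pos n hr₀; positivity, fun r ⟨hr, hrr₀⟩ => ?_⟩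
  have hmono := hanti hr hr₀ hrr₀.le
  simp only at hmono
  calc radialWeight n r₀ * f r₀ * exp (-(r₀ ^ 2 / 4)) * r ^ (-(n - 1))
      ≤ radialWeight n r * f r * exp (-(r ^ 2 / 4)) * r ^ (-(n - 1)) := by
        gcongr
        exact (mul_pos (radialWeight_pos n hr₀) hf).le.trans hmono
      _ = f r := by
        have := (rpow_pos_of_pos hr (n - 1)).ne'
        rw [radialWeight, rpow_neg hr.le, exp_neg]
        field_simp

lemma tendsto_atBot_of_mul_rpow_neg_le_deriv {w : ℝ → ℝ} {a c s : ℝ} (ha : 0 < a)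
    (hs : 1 < s) (hc : 0 < c) (hw : DifferentiableOn ℝ w (Ioo 0 a))
    (hbound : ∀ r ∈ Ioo 0 a, c * r ^ (-s) ≤ deriv w r) :
    Tendsto w (𝓝[>] 0) atBot := by
  set K := c / (s - 1)
  have hK : 0 < K := div_pos hc (by linarith)
  have hKs : K * (s - 1) = c := div_mul_cancel₀ c (by linarith)
  have hderiv : ∀ r ∈ Ioo 0 a, HasDerivAt (fun r => w r + K * r ^ (1 - s))
      (deriv w r - c * r ^ (-s)) r := fun r hr => by
    have := ((hw r hr).differentiableAt (isOpen_Ioo.mem_nhds hr)).hasDerivAt.add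
      ((hasDerivAt_rpow_const (p := 1 - s) (Or.inl hr.1.ne')).const_mul K)
    refine this.congr_deriv ?_
    rw [show 1 - s - 1 = -s by ring]
    linear_combination (-r ^ (-s)) * hKs
  have hmono : MonotoneOn (fun r => w r + K * r ^ (1 - s)) (Ioo 0 a) := by
    refine monotoneOn_of_deriv_nonneg (convex_Ioo 0 a)
      (fun r hr => (hderiv r hr).continuousAt.continuousWithinAt)
      (fun r hr => (hderiv r (interior_subset hr)).differentiableAt.differentiableWithinAt)
      fun r hr => ?_
    rw [interior_Ioo] at hr
    rw [(hderiv r hr).deriv, sub_nonneg]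
    exact hbound r hr
  have hupper : ∀ᶠ r in 𝓝[>] 0, w r ≤ (w (a / 2) + K * (a / 2) ^ (1 - s)) - K * r ^ (1 - s) := by
    filter_upwards [Ioo_mem_nhdsGT (half_pos ha)] with r hr
    have := hmono ⟨hr.1, by linarith [hr.2]⟩ ⟨half_pos ha, by linarith⟩ hr.2.le
    simp only at this
    linarith
  refine tendsto_atBot_mono' _ hupper (tendsto_atBot_add_const_left _ _ ?_)
  exact tendsto_neg_atTop_atBot.comp
    ((tendsto_rpow_neg_nhdsGT_zero (by linarith)).const_mul_atTop hK)

theorem stmt0 (n : ℕ) (hn : 2 < n) (p : ℝ) (hp : 1 < p) (w : ℝ → ℝ)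
    (hpos : ∀ r > 0, 0 < w r)
    (hC2 : ContDiffOn ℝ 2 w (Ioi 0))
    (heq : ∀ r > 0, deriv (deriv w) r + (((n : ℝ) - 1) / r + r / 2) * deriv w r
      + w r / (p - 1) + w r ^ p = 0) :
    ∀ r > 0, deriv w r ≤ 0 := by
  intro r₀ hr₀
  by_contra! hw₀
  have hanti := antitoneOn_radialWeight_mul_deriv (n := n) hC2 fun r hr => by
    have : 0 < w r / (p - 1) + w r ^ p := by
      have := hpos r hr
      have : 0 < p - 1 := by linarith
      positivity
    linarith [heq r hr]
  obtain ⟨c, hc, hbound⟩ := exists_pos_mul_rpow_le_of_antitoneOn hr₀ hanti hw₀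
  have hdiff : DifferentiableOn ℝ w (Ioo 0 r₀) :=
    (hC2.differentiableOn (by norm_num)).mono Ioo_subset_Ioi_self
  have hn' : (2 : ℝ) < n := by exact_mod_cast hn
  have hlim := tendsto_atBot_of_mul_rpow_neg_le_deriv hr₀ (by linarith) hc hdiff hbound
  obtain ⟨r, hwr, hr⟩ :=
    ((hlim.eventually (eventually_lt_atBot 0)).and self_mem_nhdsWithin).exists
  exact (hpos r hr).not_gt hwr
end

section
/- If w : (0,∞) → ℝ is a positive solution of w'' + ((n-1)/r + r/2) w' + w/(p-1) + w^p = 0 with n > 2, p > 1, and w is bounded on (0,1), then w'(r) = O(r) as r → 0⁺; i.e. there exist C, δ > 0 with |w'(r)| ≤ C r for 0 < r < δ. -/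
open Set Real

/-!
With `ρ r = r ^ (n - 1) * exp (r ^ 2 / 4)` the equation reads
`(ρ w')' = -ρ (w / (p - 1) + w ^ p)`. Since `w` is bounded on `(0, 1)`, the right-hand side is
at least `-K r ^ (n - 1)`, so `F = ρ w' + K r ^ n / n` is monotone there. If `F r₀ < 0`, then
`ρ w' ≤ F r₀ < 0` on `(0, r₀]`, so `w' ≤ -c / r` and `w` grows like `c log (1 / r)` as
`r → 0⁺`, contradicting boundedness. Hence `F ≥ 0`, which together with `w' ≤ 0` gives
`|w'| ≤ K r`.
-/

theorem le_add_mul_log_of_deriv_le_neg_div {w w' : ℝ → ℝ} {a b c : ℝ} (ha : 0 < a)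
    (hab : a ≤ b) (hw : ∀ r ∈ Icc a b, HasDerivAt w (w' r) r)
    (hw' : ∀ r ∈ Icc a b, w' r ≤ -c / r) :
    w b + c * log (b / a) ≤ w a := by
  have hg : ∀ r ∈ Icc a b, HasDerivAt (fun x => w x + c * log x) (w' r + c * r⁻¹) r :=
    fun r hr => (hw r hr).add ((hasDerivAt_log (ha.trans_le hr.1).ne').const_mul c)
  have hanti : AntitoneOn (fun x => w x + c * log x) (Icc a b) := by
    refine antitoneOn_of_deriv_nonpos (convex_Icc a b)
      (fun r hr => (hg r hr).continuousAt.continuousWithinAt) (fun r hr => ?_) (fun r hr => ?_)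
    all_goals rw [interior_Icc] at hr
    · exact (hg r (Ioo_subset_Icc_self hr)).differentiableAt.differentiableWithinAt
    · rw [(hg r (Ioo_subset_Icc_self hr)).deriv, ← div_eq_mul_inv]
      linarith [hw' r (Ioo_subset_Icc_self hr), neg_div r c]
  have := hanti (left_mem_Icc.2 hab) (right_mem_Icc.2 hab) hab
  rw [log_div (ha.trans_le hab).ne' ha.ne']
  simp only at this
  linarith

theorem not_bddAbove_of_deriv_le_neg_div {w w' : ℝ → ℝ} {b c : ℝ} (hb : 0 < b) (hc : 0 < c)
    (hw : ∀ r ∈ Ioc 0 b, HasDerivAt w (w' r) r) (hw' : ∀ r ∈ Ioc 0 b, w' r ≤ -c / r) :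
    ¬ BddAbove (w '' Ioc 0 b) := by
  rintro ⟨B, hB⟩
  set t := max 0 (B - w b) + 1
  set a := b * exp (-(t / c))
  have ha : 0 < a := by positivity
  have hab : a ≤ b :=
    mul_le_of_le_one_right hb.le (exp_le_one_iff.2 (neg_nonpos.2 (by positivity)))
  have hIcc : Icc a b ⊆ Ioc 0 b := Icc_subset_Ioc_iff hab |>.2 ⟨ha, le_rfl⟩
  have hlog : c * log (b / a) = t := by
    rw [div_mul_cancel_left₀ hb.ne', log_inv, log_exp]
    field_simp
  have := le_add_mul_log_of_deriv_le_neg_div ha hab (fun r hr => hw r (hIcc hr))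
    (fun r hr => hw' r (hIcc hr))
  have := hB (mem_image_of_mem w (hIcc (left_mem_Icc.2 hab)))
  linarith [le_max_right 0 (B - w b)]

theorem weighted_deriv_add_nonneg_of_monotoneOn {w w' ρ h : ℝ → ℝ} {A b : ℝ}
    (hw : ∀ r ∈ Ioo 0 b, HasDerivAt w (w' r) r) (hbdd : BddAbove (w '' Ioo 0 b))
    (hρ : ∀ r ∈ Ioo 0 b, 0 < ρ r ∧ ρ r ≤ A * r) (hh : ∀ r ∈ Ioo 0 b, 0 ≤ h r)
    (hmono : MonotoneOn (fun r => ρ r * w' r + h r) (Ioo 0 b)) :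
    ∀ r ∈ Ioo 0 b, 0 ≤ ρ r * w' r + h r := by
  intro r₀ hr₀
  by_contra! hneg
  obtain ⟨c, hc, hFc⟩ : ∃ c, 0 < c ∧ ρ r₀ * w' r₀ + h r₀ = -c :=
    ⟨_, neg_pos.2 hneg, (neg_neg _).symm⟩
  have hA : 0 < A := by
    have := hρ r₀ hr₀
    exact pos_of_mul_pos_left (this.1.trans_le this.2) hr₀.1.le
  have hsub : Ioc 0 r₀ ⊆ Ioo 0 b := Ioc_subset_Ioo_right hr₀.2
  refine not_bddAbove_of_deriv_le_neg_div hr₀.1 (div_pos hc hA)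
    (fun r hr => hw r (hsub hr)) (fun r hr => ?_) (hbdd.mono (image_mono hsub))
  obtain ⟨hρ0, hρA⟩ := hρ r (hsub hr)
  have hflux : ρ r * w' r ≤ -c := by
    linarith [hmono (hsub hr) hr₀ hr.2, hh r (hsub hr)]
  calc w' r ≤ -c / ρ r := by rw [le_div_iff₀ hρ0]; linarith
    _ ≤ -c / (A * r) := by
      rw [neg_div, neg_div, neg_le_neg_iff]
      exact div_le_div_of_nonneg_left hc.le hρ0 hρA
    _ = -(c / A) / r := by field_simp

theorem hasDerivAt_pow_mul_exp_mul {v : ℝ → ℝ} {v' r : ℝ} (k : ℕ) (hr : r ≠ 0)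
    (hv : HasDerivAt v v' r) :
    HasDerivAt (fun x => x ^ k * exp (x ^ 2 / 4) * v x)
      (r ^ k * exp (r ^ 2 / 4) * (v' + (k / r + r / 2) * v r)) r := by
  have he : HasDerivAt (fun x : ℝ => exp (x ^ 2 / 4)) (exp (r ^ 2 / 4) * (2 * r ^ 1 / 4)) r := by
    simpa using ((hasDerivAt_pow 2 r).div_const 4).exp
  refine (((hasDerivAt_pow k r).fun_mul he).fun_mul hv).congr_deriv ?_
  rcases k with _ | k
  · simp
    ring
  · push_cast
    field_simp
    ring

theorem monotoneOn_add_mul_pow_div {G G' : ℝ → ℝ} {K a b : ℝ} (k : ℕ)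
    (hG : ∀ r ∈ Ioo a b, HasDerivAt G (G' r) r)
    (hG' : ∀ r ∈ Ioo a b, -(K * r ^ k) ≤ G' r) :
    MonotoneOn (fun r => G r + K * r ^ (k + 1) / (k + 1)) (Ioo a b) := by
  have hF : ∀ r ∈ Ioo a b,
      HasDerivAt (fun r => G r + K * r ^ (k + 1) / (k + 1)) (G' r + K * r ^ k) r := by
    intro r hr
    refine ((hG r hr).add (((hasDerivAt_pow (k + 1) r).const_mul K).div_const
      ((k : ℝ) + 1))).congr_deriv ?_
    push_cast
    field_simp
  refine monotoneOn_of_deriv_nonneg (convex_Ioo a b)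
    (fun r hr => (hF r hr).continuousAt.continuousWithinAt) (fun r hr => ?_) (fun r hr => ?_)
  all_goals rw [interior_Ioo] at hr
  · exact (hF r hr).differentiableAt.differentiableWithinAt
  · rw [(hF r hr).deriv]
    linarith [hG' r hr]

theorem exp_sq_div_four_le_exp_one {r : ℝ} (hr : r ∈ Ioo 0 1) : exp (r ^ 2 / 4) ≤ exp 1 :=
  exp_le_exp.2 (by nlinarith [hr.1, hr.2])

theorem pow_mul_exp_sq_div_four_le {r : ℝ} {k : ℕ} (hk : k ≠ 0) (hr : r ∈ Ioo 0 1) :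
    r ^ k * exp (r ^ 2 / 4) ≤ exp 1 * r := by
  rw [mul_comm (exp 1)]
  exact mul_le_mul (pow_le_of_le_one hr.1.le hr.2.le hk) (exp_sq_div_four_le_exp_one hr)
    (exp_pos _).le hr.1.le

theorem abs_le_mul_of_pow_mul_exp_mul_add_nonneg {v K r : ℝ} {k : ℕ} (hr : 0 < r) (hK : 0 ≤ K)
    (hv : v ≤ 0) (h : 0 ≤ r ^ k * exp (r ^ 2 / 4) * v + K * r ^ (k + 1) / (k + 1)) :
    |v| ≤ K * r := by
  rw [abs_of_nonpos hv]
  refine le_of_mul_le_mul_left ?_ (pow_pos hr k)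
  calc r ^ k * -v ≤ r ^ k * exp (r ^ 2 / 4) * -v := by
        gcongr
        · linarith
        · exact le_mul_of_one_le_right (by positivity) (one_le_exp (by positivity))
    _ ≤ K * r ^ (k + 1) / (k + 1) := by linarith
    _ ≤ K * r ^ (k + 1) := div_le_self (by positivity) (by linarith)
    _ = r ^ k * (K * r) := by ring

theorem exists_pos_bound_div_sub_one_add_rpow {p : ℝ} (hp : 1 < p) {w : ℝ → ℝ} {s : Set ℝ}
    (hpos : ∀ r ∈ s, 0 < w r) (hbdd : ∃ B, ∀ r ∈ s, w r ≤ B) :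
    ∃ M > 0, ∀ r ∈ s, 0 ≤ w r / (p - 1) + w r ^ p ∧ w r / (p - 1) + w r ^ p ≤ M := by
  obtain ⟨B, hB⟩ := hbdd
  have hp1 : 0 < p - 1 := by linarith
  refine ⟨max B 1 / (p - 1) + max B 1 ^ p, add_pos (div_pos (by positivity) hp1) (by positivity),
    fun r hr => ?_⟩
  have := hpos r hr
  have hwB : w r ≤ max B 1 := (hB r hr).trans (le_max_left _ _)
  exact ⟨by positivity, add_le_add (by gcongr) (rpow_le_rpow (by positivity) hwB (by linarith))⟩

theorem hasDerivAt_deriv_of_contDiffOn_two {w : ℝ → ℝ} {s : Set ℝ} {r : ℝ}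
    (hw : ContDiffOn ℝ 2 w s) (hs : IsOpen s) (hr : r ∈ s) :
    HasDerivAt w (deriv w r) r ∧ HasDerivAt (deriv w) (deriv (deriv w) r) r :=
  ⟨((hw.differentiableOn (by norm_num)).differentiableAt (hs.mem_nhds hr)).hasDerivAt,
    (((hw.deriv_of_isOpen (m := 1) hs (by norm_num)).differentiableOn
      (by norm_num)).differentiableAt (hs.mem_nhds hr)).hasDerivAt⟩

theorem stmt1_general (n : ℕ) (hn : 2 < n) (p : ℝ) (hp : 1 < p) (w : ℝ → ℝ)
    (hpos : ∀ r > 0, 0 < w r)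
    (hC2 : ContDiffOn ℝ 2 w (Ioi 0))
    (heq : ∀ r > 0, deriv (deriv w) r + (((n : ℝ) - 1) / r + r / 2) * deriv w r
      + w r / (p - 1) + w r ^ p = 0)
    (hdec : ∀ r > 0, deriv w r ≤ 0)
    (hbdd : ∃ B, ∀ r ∈ Ioo (0:ℝ) 1, w r ≤ B) :
    ∃ C > 0, ∃ δ > 0, ∀ r, 0 < r → r < δ → |deriv w r| ≤ C * r := by
  obtain ⟨k, rfl⟩ : ∃ k, n = k + 1 := ⟨n - 1, by omega⟩
  obtain ⟨M, hM, hf⟩ :=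
    exists_pos_bound_div_sub_one_add_rpow hp (fun r hr => hpos r hr.1) hbdd
  have hw (r) (hr : r ∈ Ioo (0:ℝ) 1) := hasDerivAt_deriv_of_contDiffOn_two hC2 isOpen_Ioi hr.1
  have hflux : ∀ r ∈ Ioo (0:ℝ) 1, HasDerivAt (fun x => x ^ k * exp (x ^ 2 / 4) * deriv w x)
      (-(r ^ k * exp (r ^ 2 / 4) * (w r / (p - 1) + w r ^ p))) r := fun r hr => by
    refine (hasDerivAt_pow_mul_exp_mul k hr.1.ne' (hw r hr).2).congr_deriv ?_
    have := heq r hr.1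
    push_cast at this
    linear_combination (r ^ k * exp (r ^ 2 / 4)) * this
  have hmono := monotoneOn_add_mul_pow_div (K := M * exp 1) k hflux fun r hr => by
    have hr0 := hr.1
    have : r ^ k * exp (r ^ 2 / 4) * (w r / (p - 1) + w r ^ p) ≤ r ^ k * exp 1 * M :=
      mul_le_mul (mul_le_mul_of_nonneg_left (exp_sq_div_four_le_exp_one hr) (by positivity))
        (hf r hr).2 (hf r hr).1 (by positivity)
    linarith
  have hF := weighted_deriv_add_nonneg_of_monotoneOn (A := exp 1) (fun r hr => (hw r hr).1)
    (hbdd.imp fun B hB => by rintro _ ⟨r, hr, rfl⟩; exact hB r hr)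
    (fun r hr => ⟨by have := hr.1; positivity, pow_mul_exp_sq_div_four_le (by omega) hr⟩)
    (fun r hr => by have := hr.1; positivity) hmono
  refine ⟨M * exp 1, by positivity, 1, one_pos, fun r hr0 hr1 => ?_⟩
  exact abs_le_mul_of_pow_mul_exp_mul_add_nonneg hr0 (by positivity) (hdec r hr0)
    (hF r ⟨hr0, hr1⟩)

theorem stmt1 (n : ℕ) (hn : 2 < n) (p : ℝ) (hp : 1 < p) (w : ℝ → ℝ)
    (hpos : ∀ r > 0, 0 < w r)
    (hC2 : ContDiffOn ℝ 2 w (Ioi 0))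
    (heq : ∀ r > 0, deriv (deriv w) r + (((n : ℝ) - 1) / r + r / 2) * deriv w r
      + w r / (p - 1) + w r ^ p = 0)
    (hdec : ∀ r > 0, deriv w r ≤ 0)
    (C₀ : ℝ) (hapriori : ∀ r ∈ Ioo (0:ℝ) 1,
      r ^ (2 / (p - 1)) * w r + r ^ (2 / (p - 1) + 1) * |deriv w r|
        + r ^ (2 / (p - 1) + 2) * |deriv (deriv w) r| ≤ C₀)
    (hbdd : ∃ B, ∀ r ∈ Ioo (0:ℝ) 1, w r ≤ B) :
    ∃ C > 0, ∃ δ > 0, ∀ r, 0 < r → r < δ → |deriv w r| ≤ C * r :=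
  stmt1_general n hn p hp w hpos hC2 heq hdec hbdd
end

section
/- Let v : (0,∞) → ℝ be C¹ with |(v'(r)² r²)'| ≤ M/r on (0,1) and ∫_ρ^R v'(r)² r dr ≤ C for all 0 < ρ < R ≤ 1. Then r v'(r) → 0 as r → 0⁺. -/
/-! Put `g r = (r v'(r))²`. The derivative bound makes `g + M log` increasing, so
`g r ≤ g x + M L` for `r ≤ x ≤ e^L r`. Dividing by `x` and integrating over `[r, e^L r]` gives
`L g(r) ≤ ∫_r^{e^L r} v'(x)² x dx + M L²`. The Dirichlet integral converges, so the integral on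
the right tends to `0` as `r → 0`, whence `limsup g ≤ M L` for every `L > 0`. -/

open Set Filter Topology MeasureTheory Real

theorem integrableOn_Ioc_of_forall_intervalIntegral_le {f : ℝ → ℝ} {a b C : ℝ} (hab : a < b)
    (hf : ContinuousOn f (Ioc a b)) (hf₀ : ∀ x ∈ Ioc a b, 0 ≤ f x)
    (hle : ∀ ρ ∈ Ioo a b, ∫ x in ρ..b, f x ≤ C) : IntegrableOn f (Ioc a b) := by
  obtain ⟨u, -, hu, hu_lim⟩ := exists_seq_strictAnti_tendsto' hab
  refine integrableOn_Ioc_of_intervalIntegral_norm_bounded_left (I := C) (fun n => ?_) hu_lim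
    (Eventually.of_forall fun n => ?_)
  · have hsub : Icc (u n) b ⊆ Ioc a b := Icc_subset_Ioc_iff (hu n).2.le |>.2 ⟨(hu n).1, le_rfl⟩
    exact (hf.mono hsub).integrableOn_Icc.mono_set Ioc_subset_Icc_self
  · rw [← intervalIntegral.integral_of_le (hu n).2.le]
    refine le_of_eq_of_le (intervalIntegral.integral_congr fun x hx => ?_) (hle (u n) (hu n))
    rw [uIcc_of_le (hu n).2.le] at hx
    exact Real.norm_of_nonneg (hf₀ x ⟨(hu n).1.trans_le hx.1, hx.2⟩)

theorem monotoneOn_add_mul_log {g : ℝ → ℝ} {M a b : ℝ} (ha : 0 ≤ a)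
    (hg : ∀ t ∈ Ioo a b, DifferentiableAt ℝ g t) (hg' : ∀ t ∈ Ioo a b, -(M / t) ≤ deriv g t) :
    MonotoneOn (fun t => g t + M * log t) (Ioo a b) := by
  have hd : ∀ t ∈ Ioo a b, DifferentiableAt ℝ (fun t => g t + M * log t) t := fun t ht =>
    (hg t ht).add ((differentiableAt_log (ha.trans_lt ht.1).ne').const_mul M)
  refine monotoneOn_of_deriv_nonneg (convex_Ioo a b)
    (fun t ht => (hd t ht).continuousAt.continuousWithinAt)
    (fun t ht => (hd t (interior_subset ht)).differentiableWithinAt) fun t ht => ?_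
  rw [interior_Ioo] at ht
  rw [deriv_fun_add (hg t ht) ((differentiableAt_log (ha.trans_lt ht.1).ne').const_mul M),
    deriv_const_mul _ (differentiableAt_log (ha.trans_lt ht.1).ne'), deriv_log, ← div_eq_mul_inv]
  linarith [hg' t ht]

theorem tendsto_intervalIntegral_const_mul_nhdsGT_zero {f : ℝ → ℝ} {b K : ℝ} (hb : 0 < b)
    (hK : 0 ≤ K) (hf : IntegrableOn f (Ioc 0 b)) :
    Tendsto (fun r => ∫ x in r..K * r, f x) (𝓝[>] 0) (𝓝 0) := by
  have hf' : IntervalIntegrable f volume 0 b :=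
    (intervalIntegrable_iff_integrableOn_Ioc_of_le hb.le).2 hf
  have hF : Tendsto (fun x => ∫ t in 0..x, f t) (𝓝[uIcc 0 b] 0) (𝓝 0) := by
    simpa using
      (intervalIntegral.continuousOn_primitive_interval' hf' left_mem_uIcc 0 left_mem_uIcc).tendsto
  have hmul : ∀ c, 0 ≤ c → Tendsto (fun r => c * r) (𝓝[>] 0) (𝓝[uIcc 0 b] 0) := by
    intro c hc
    have hlim : Tendsto (fun r => c * r) (𝓝[>] 0) (𝓝 0) := by
      simpa using ((continuous_const_mul c).tendsto 0).mono_left nhdsWithin_le_nhds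
    refine tendsto_nhdsWithin_iff.2 ⟨hlim, ?_⟩
    filter_upwards [self_mem_nhdsWithin, hlim.eventually (ge_mem_nhds hb)] with r hr hcr
    rw [uIcc_of_le hb.le]
    exact ⟨mul_nonneg hc (le_of_lt hr), hcr⟩
  have hKr := hmul K hK
  have hr : Tendsto (fun r : ℝ => r) (𝓝[>] 0) (𝓝[uIcc 0 b] 0) := by
    simpa using hmul 1 zero_le_one
  have hsub : ∀ᶠ r in 𝓝[>] 0,
      (∫ t in 0..K * r, f t) - ∫ t in 0..r, f t = ∫ x in r..K * r, f x := by
    filter_upwards [hKr.eventually self_mem_nhdsWithin, hr.eventually self_mem_nhdsWithin]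
      with r hKr hr
    exact intervalIntegral.integral_interval_sub_left
      (hf'.mono_set (uIcc_subset_uIcc_left hKr)) (hf'.mono_set (uIcc_subset_uIcc_left hr))
  simpa using ((hF.comp hKr).sub (hF.comp hr)).congr' hsub

theorem mul_log_div_le_intervalIntegral_div_add {g : ℝ → ℝ} {M b r r' : ℝ} (hM : 0 ≤ M)
    (hmono : MonotoneOn (fun t => g t + M * log t) (Ioo 0 b))
    (hint : IntervalIntegrable (fun x => g x / x) volume r r')
    (hr : 0 < r) (hrr' : r ≤ r') (hr'b : r' < b) :
    g r * log (r' / r) ≤ (∫ x in r..r', g x / x) + M * log (r' / r) ^ 2 := by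
  have hr' : 0 < r' := hr.trans_le hrr'
  have hinv : IntervalIntegrable (fun x : ℝ => x⁻¹) volume r r' :=
    intervalIntegral.intervalIntegrable_inv (fun x hx => ((lt_min hr hr').trans_le hx.1).ne')
      continuousOn_id
  have hpt : ∀ x ∈ Icc r r', g r * x⁻¹ ≤ g x / x + M * log (r' / r) * x⁻¹ := by
    intro x ⟨hrx, hxr'⟩
    have hx : 0 < x := hr.trans_le hrx
    have hmon := hmono ⟨hr, hrx.trans_lt (hxr'.trans_lt hr'b)⟩ ⟨hx, hxr'.trans_lt hr'b⟩ hrx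
    have hlog : log x - log r ≤ log (r' / r) := by
      rw [log_div hr'.ne' hr.ne']; linarith [log_le_log hx hxr']
    have : g r ≤ g x + M * log (r' / r) := by
      linarith [mul_le_mul_of_nonneg_left hlog hM]
    rw [div_eq_mul_inv, ← add_mul]
    exact mul_le_mul_of_nonneg_right this (inv_nonneg.2 hx.le)
  have := intervalIntegral.integral_mono_on hrr' (hinv.const_mul _)
    (hint.add (hinv.const_mul _)) hpt
  rw [intervalIntegral.integral_add hint (hinv.const_mul _), intervalIntegral.integral_const_mul,
    intervalIntegral.integral_const_mul, integral_inv_of_pos hr hr'] at this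
  linarith

theorem tendsto_nhdsGT_zero_of_monotoneOn_add_mul_log {g : ℝ → ℝ} {M b : ℝ} (hb : 0 < b)
    (hM : 0 < M) (hg₀ : ∀ x ∈ Ioo 0 b, 0 ≤ g x)
    (hmono : MonotoneOn (fun t => g t + M * log t) (Ioo 0 b))
    (hint : IntegrableOn (fun x => g x / x) (Ioc 0 b)) :
    Tendsto g (𝓝[>] 0) (𝓝 0) := by
  refine tendsto_order.2 ⟨fun a ha => ?_, fun ε hε => ?_⟩
  · filter_upwards [Ioo_mem_nhdsGT hb] with x hx using ha.trans_le (hg₀ x hx)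
  -- With `r' = e^L r` the estimate reads `g r ≤ M L + (∫ r..r', g x / x) / L`.
  set L := ε / (2 * M)
  have hL : 0 < L := by positivity
  have htail := tendsto_intervalIntegral_const_mul_nhdsGT_zero hb (exp_pos L).le hint
  have hKr : Tendsto (fun r => exp L * r) (𝓝[>] 0) (𝓝 0) := by
    simpa using ((continuous_const_mul (exp L)).tendsto 0).mono_left nhdsWithin_le_nhds
  have hεL : 0 < ε * L / 2 := by positivity
  filter_upwards [self_mem_nhdsWithin, htail.eventually (gt_mem_nhds hεL),
    hKr.eventually (gt_mem_nhds hb)] with r (hr : 0 < r) htail_r hKr_r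
  have hrKr : r ≤ exp L * r := le_mul_of_one_le_left hr.le (one_le_exp hL.le)
  have hint_r : IntervalIntegrable (fun x => g x / x) volume r (exp L * r) :=
    (intervalIntegrable_iff_integrableOn_Ioc_of_le hrKr).2
      (hint.mono_set (Ioc_subset_Ioc hr.le hKr_r.le))
  have := mul_log_div_le_intervalIntegral_div_add hM.le hmono hint_r hr hrKr hKr_r
  rw [mul_div_assoc, div_self hr.ne', mul_one, log_exp] at this
  have hML : M * L ^ 2 = ε * L / 2 := by simp only [L]; field_simp
  exact lt_of_mul_lt_mul_right (by linarith) hL.le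

theorem stmt7_general (v : ℝ → ℝ) (hC1 : ContDiffOn ℝ 1 v (Ioi 0))
    (hdiff : ∀ r ∈ Ioo (0:ℝ) 1,
      DifferentiableAt ℝ (fun s : ℝ => (deriv v s) ^ 2 * s ^ 2) r)
    (M C : ℝ) (hM : 0 < M)
    (hder : ∀ r ∈ Ioo (0:ℝ) 1,
      |deriv (fun s : ℝ => (deriv v s) ^ 2 * s ^ 2) r| ≤ M / r)
    (hint : ∀ ρ R : ℝ, 0 < ρ → ρ < R → R ≤ 1 →
      (∫ r in ρ..R, (deriv v r) ^ 2 * r) ≤ C) :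
    Tendsto (fun r : ℝ => r * deriv v r) (nhdsWithin 0 (Ioi 0)) (nhds 0) := by
  have hv' : ContinuousOn (deriv v) (Ioi 0) := hC1.continuousOn_deriv_of_isOpen isOpen_Ioi le_rfl
  have hdirichlet : IntegrableOn (fun x => deriv v x ^ 2 * x) (Ioc 0 1) :=
    integrableOn_Ioc_of_forall_intervalIntegral_le one_pos
      (((hv'.mono fun x hx => hx.1).pow 2).mul continuousOn_id)
      (fun x hx => mul_nonneg (sq_nonneg _) hx.1.le) fun ρ hρ => hint ρ 1 hρ.1 hρ.2 le_rfl
  have hsq : Tendsto (fun s => deriv v s ^ 2 * s ^ 2) (𝓝[>] 0) (𝓝 0) := by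
    refine tendsto_nhdsGT_zero_of_monotoneOn_add_mul_log one_pos hM (fun x _ => by positivity)
      (monotoneOn_add_mul_log le_rfl hdiff fun t ht => (abs_le.1 (hder t ht)).1) ?_
    refine hdirichlet.congr_fun (fun x (hx : 0 < x ∧ _) => ?_) measurableSet_Ioc
    field_simp
  rw [tendsto_zero_iff_abs_tendsto_zero]
  refine (sqrt_zero ▸ hsq.sqrt).congr fun r => ?_
  rw [Function.comp_apply, ← sqrt_sq_eq_abs, mul_pow, mul_comm]

theorem stmt7 (v : ℝ → ℝ) (hC1 : ContDiffOn ℝ 1 v (Ioi 0))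
    (hdiff : ∀ r ∈ Ioo (0:ℝ) 1,
      DifferentiableAt ℝ (fun s : ℝ => (deriv v s) ^ 2 * s ^ 2) r)
    (M C : ℝ) (hM : 0 < M) (hC : 0 < C)
    (hder : ∀ r ∈ Ioo (0:ℝ) 1,
      |deriv (fun s : ℝ => (deriv v s) ^ 2 * s ^ 2) r| ≤ M / r)
    (hint : ∀ ρ R : ℝ, 0 < ρ → ρ < R → R ≤ 1 →
      (∫ r in ρ..R, (deriv v r) ^ 2 * r) ≤ C) :
    Tendsto (fun r : ℝ => r * deriv v r) (nhdsWithin 0 (Ioi 0)) (nhds 0) :=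
  stmt7_general v hC1 hdiff M C hM hder hint
end

section
/- Let p > (n+2)/(n-2), n > 2, and let v be a positive C² solution on (0,∞) of v'' + ((n-1-2α)/r + r/2) v' + r^{-2}(v^p - L^{p-1} v) = 0 with v, r v', r² v'' bounded on (0,1). Then ∫_ρ^R v'(r)² r dr ≤ C uniformly for 0 < ρ < R ≤ 1. -/
/-!
Multiplying the equation by `r² v'` shows that the energy
`E = r² v'²/2 + v^{p+1}/(p+1) - L^{p-1} v²/2` satisfies
`E' = -((n - 2 - 2α) r + r³/2) v'²`. Since `n - 2 - 2α > 0` exactly when `p > (n+2)/(n-2)`,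
integrating gives `(n - 2 - 2α) ∫_ρ^R v'² r dr ≤ E(ρ) - E(R)`, and the bounds on `v` and `r v'`
bound `E` on `(0, 1]`.
-/

open Set Filter
open intervalIntegral

noncomputable def energy (p κ : ℝ) (v : ℝ → ℝ) (r : ℝ) : ℝ :=
  r ^ 2 * deriv v r ^ 2 / 2 + v r ^ (p + 1) / (p + 1) - κ * v r ^ 2 / 2

theorem hasDerivAt_energy {a p κ r : ℝ} {v : ℝ → ℝ} (hr : 0 < r) (hp : p + 1 ≠ 0)
    (hv : 0 < v r) (hv₁ : HasDerivAt v (deriv v r) r)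
    (hv₂ : HasDerivAt (deriv v) (deriv (deriv v) r) r)
    (hode : deriv (deriv v) r + (a / r + r / 2) * deriv v r
      + r ^ (-2 : ℝ) * (v r ^ p - κ * v r) = 0) :
    HasDerivAt (energy p κ v) (-((a - 1) * r + r ^ 3 / 2) * deriv v r ^ 2) r := by
  have hkin := ((hasDerivAt_pow 2 r).mul (hv₂.pow 2)).div_const 2
  have hpot := (hv₁.rpow_const (p := p + 1) (Or.inl hv.ne')).div_const (p + 1)
  have hquad := ((hv₁.pow 2).const_mul κ).div_const 2
  refine ((hkin.add hpot).sub hquad).congr_deriv ?_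
  rw [Real.rpow_neg hr.le, Real.rpow_two] at hode
  have hv'' : deriv (deriv v) r
      = -((a / r + r / 2) * deriv v r) - (v r ^ p - κ * v r) / r ^ 2 := by
    field_simp at hode ⊢
    linarith
  rw [hv'', add_sub_cancel_right]
  simp only [Pi.pow_apply]
  field_simp
  ring

theorem mul_integral_sq_mul_le_sub_of_hasDerivAt {E w : ℝ → ℝ} {c ρ R : ℝ}
    (hρ : 0 ≤ ρ) (hρR : ρ ≤ R) (hw : ContinuousOn w (Icc ρ R))
    (hE : ∀ r ∈ Icc ρ R, HasDerivAt E (-(c * r + r ^ 3 / 2) * w r ^ 2) r) :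
    c * ∫ r in ρ..R, w r ^ 2 * r ≤ E ρ - E R := by
  rw [← integral_const_mul, ← neg_sub_neg]
  refine integral_le_sub_of_hasDeriv_right_of_le hρR
    (fun r hr ↦ (hE r hr).neg.continuousAt.continuousWithinAt)
    (fun r hr ↦ (hE r (Ioo_subset_Icc_self hr)).neg.hasDerivWithinAt)
    (((hw.pow 2).mul continuousOn_id).const_smul c).integrableOn_Icc fun r hr ↦ ?_
  have hr : 0 ≤ r := hρ.trans hr.1.le
  have : 0 ≤ r ^ 3 / 2 * w r ^ 2 := by positivity
  linarith

theorem abs_energy_le {p κ C r : ℝ} {v : ℝ → ℝ} (hp : 0 < p + 1) (hr : 0 ≤ r) (hv : 0 < v r)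
    (hC : v r + r * |deriv v r| ≤ C) :
    |energy p κ v r| ≤ C ^ 2 / 2 + C ^ (p + 1) / (p + 1) + |κ| * C ^ 2 / 2 := by
  have hrv' : 0 ≤ r * |deriv v r| := by positivity
  have hkin₀ : 0 ≤ r ^ 2 * deriv v r ^ 2 := by positivity
  have hkin : r ^ 2 * deriv v r ^ 2 ≤ C ^ 2 := by
    rw [← sq_abs (deriv v r), ← mul_pow]
    exact pow_le_pow_left₀ hrv' (by linarith) 2
  have hpot₀ : 0 ≤ v r ^ (p + 1) / (p + 1) := by positivity
  have hpot : v r ^ (p + 1) / (p + 1) ≤ C ^ (p + 1) / (p + 1) := by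
    gcongr
    linarith
  have hquad : |κ * v r ^ 2| ≤ |κ| * C ^ 2 := by
    rw [abs_mul, abs_pow, abs_of_pos hv]
    gcongr
    linarith
  obtain ⟨hquad_lo, hquad_hi⟩ := abs_le.1 hquad
  rw [energy, abs_le]
  constructor <;> linarith

theorem forall_Ioc_le_of_forall_Ioo_le {g : ℝ → ℝ} {a b C : ℝ} (hab : a < b)
    (hg : ContinuousAt g b) (h : ∀ x ∈ Ioo a b, g x ≤ C) : ∀ x ∈ Ioc a b, g x ≤ C := by
  rintro x ⟨hax, hxb⟩
  rcases hxb.lt_or_eq with hxb | rfl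
  · exact h x ⟨hax, hxb⟩
  refine hg.continuousWithinAt.closure_le ?_ continuousWithinAt_const h
  rw [closure_Ioo hab.ne]
  exact right_mem_Icc.2 hab.le

theorem one_lt_of_div_lt {n p : ℝ} (hn : 2 < n) (hp : (n + 2) / (n - 2) < p) : 1 < p := by
  have : 1 < (n + 2) / (n - 2) := by rw [one_lt_div] <;> linarith
  linarith

theorem four_div_lt_sub_two {n p : ℝ} (hn : 2 < n) (hp : (n + 2) / (n - 2) < p) :
    4 / (p - 1) < n - 2 := by
  have hp1 := one_lt_of_div_lt hn hp
  rw [div_lt_iff₀ (by linarith)] at hp ⊢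
  nlinarith

theorem stmt8_general (n : ℕ) (hn : 2 < n) (p : ℝ) (hp : ((n : ℝ) + 2) / ((n : ℝ) - 2) < p)
    (α L : ℝ) (hα : α = 2 / (p - 1))
    (v : ℝ → ℝ) (hpos : ∀ r > 0, 0 < v r)
    (hC2 : ContDiffOn ℝ 2 v (Ioi 0))
    (heq : ∀ r > 0, deriv (deriv v) r + (((n : ℝ) - 1 - 2 * α) / r + r / 2) * deriv v r
      + r ^ (-2 : ℝ) * (v r ^ p - L ^ (p - 1) * v r) = 0)
    (C₀ : ℝ) (hbd : ∀ r ∈ Ioo (0:ℝ) 1,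
      v r + r * |deriv v r| + r ^ 2 * |deriv (deriv v) r| ≤ C₀) :
    ∃ C > 0, ∀ ρ R : ℝ, 0 < ρ → ρ < R → R ≤ 1 →
      (∫ r in ρ..R, (deriv v r) ^ 2 * r) ≤ C := by
  have hn' : (2 : ℝ) < n := by exact_mod_cast hn
  have hp1 := one_lt_of_div_lt hn' hp
  have hc : 0 < (n - 1 - 2 * α : ℝ) - 1 := by
    have := four_div_lt_sub_two hn' hp
    rw [hα, mul_div_assoc']
    linarith
  have hv₁ : ContDiffOn ℝ 1 (deriv v) (Ioi 0) := hC2.deriv_of_isOpen isOpen_Ioi (by norm_num)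
  have hE (r : ℝ) (hr : 0 < r) := hasDerivAt_energy hr (by linarith) (hpos r hr)
    ((hC2.differentiableOn two_ne_zero).differentiableAt (Ioi_mem_nhds hr)).hasDerivAt
    ((hv₁.differentiableOn one_ne_zero).differentiableAt (Ioi_mem_nhds hr)).hasDerivAt (heq r hr)
  have hbd' : ∀ r ∈ Ioc (0 : ℝ) 1, v r + r * |deriv v r| ≤ C₀ :=
    forall_Ioc_le_of_forall_Ioo_le one_pos
      ((hC2.continuousOn.continuousAt (Ioi_mem_nhds one_pos)).add
        (continuousAt_id.mul (hv₁.continuousOn.continuousAt (Ioi_mem_nhds one_pos)).abs))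
      fun r hr ↦ by nlinarith [hbd r hr, abs_nonneg (deriv (deriv v) r)]
  have hC₀ : 0 < C₀ := by
    linarith [hpos 1 one_pos, hbd' 1 (right_mem_Ioc.2 one_pos), abs_nonneg (deriv v 1)]
  set B := C₀ ^ 2 / 2 + C₀ ^ (p + 1) / (p + 1) + |L ^ (p - 1)| * C₀ ^ 2 / 2 with hB
  refine ⟨2 * B / ((n - 1 - 2 * α : ℝ) - 1), by positivity, fun ρ R hρ hρR hR ↦ ?_⟩
  have hR₀ : 0 < R := hρ.trans hρR
  have hdiss := mul_integral_sq_mul_le_sub_of_hasDerivAt hρ.le hρR.le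
    (hv₁.continuousOn.mono fun r hr ↦ hρ.trans_le hr.1) fun r hr ↦ hE r (hρ.trans_le hr.1)
  obtain ⟨-, hρB⟩ := abs_le.1 (abs_energy_le (p := p) (κ := L ^ (p - 1)) (by linarith) hρ.le
    (hpos ρ hρ) (hbd' ρ ⟨hρ, hρR.le.trans hR⟩))
  obtain ⟨hRB, -⟩ := abs_le.1 (abs_energy_le (p := p) (κ := L ^ (p - 1)) (by linarith) hR₀.le
    (hpos R hR₀) (hbd' R ⟨hR₀, hR⟩))
  rw [le_div_iff₀ hc, mul_comm]
  linarith

theorem stmt8 (n : ℕ) (hn : 2 < n) (p : ℝ) (hp : ((n : ℝ) + 2) / ((n : ℝ) - 2) < p)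
    (α L : ℝ) (hα : α = 2 / (p - 1)) (hL : 0 < L)
    (hLp : L ^ (p - 1) = 2 / (p - 1) ^ 2 * (((n : ℝ) - 2) * p - n))
    (v : ℝ → ℝ) (hpos : ∀ r > 0, 0 < v r)
    (hC2 : ContDiffOn ℝ 2 v (Ioi 0))
    (heq : ∀ r > 0, deriv (deriv v) r + (((n : ℝ) - 1 - 2 * α) / r + r / 2) * deriv v r
      + r ^ (-2 : ℝ) * (v r ^ p - L ^ (p - 1) * v r) = 0)
    (C₀ : ℝ) (hbd : ∀ r ∈ Ioo (0:ℝ) 1,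
      v r + r * |deriv v r| + r ^ 2 * |deriv (deriv v) r| ≤ C₀) :
    ∃ C > 0, ∀ ρ R : ℝ, 0 < ρ → ρ < R → R ≤ 1 →
      (∫ r in ρ..R, (deriv v r) ^ 2 * r) ≤ C :=
  stmt8_general n hn p hp α L hα v hpos hC2 heq C₀ hbd
end

section
/- Let h be a positive C¹ function on (0,1] with |r h'(r)| ≤ C_h on (0,1), r h'(r) → 0 as r → 0⁺, and suppose R² h'(R)² ≤ ∫_0^R h'(r)² r³ dr for all R ∈ (0,1). Then h' ≡ 0 on (0,1). -/
/-!
Writing `g r = r² h'(r)²`, the hypotheses say `0 ≤ g ≤ C²` and `g R ≤ ∫₀ᴿ g(r) r dr`, a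
Gronwall-type inequality with kernel `r`. Feeding a bound `g ≤ M (r²/2)ⁿ / n!` into its right-hand
side returns the next term of the exponential series, `g ≤ M (r²/2)ⁿ⁺¹ / (n+1)!`; since these terms
tend to `0`, `g` vanishes, hence so does `h'` on `(0, 1)`.
-/

open Set Filter Topology MeasureTheory Nat

lemma integral_mul_sq_half_pow_div_factorial_mul_id (M R : ℝ) (n : ℕ) :
    ∫ r in (0 : ℝ)..R, M * (r ^ 2 / 2) ^ n / n ! * r = M * (R ^ 2 / 2) ^ (n + 1) / (n + 1)! := by
  have hintegrand : (fun r : ℝ => M * (r ^ 2 / 2) ^ n / n ! * r)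
      = fun r => M / (2 ^ n * n !) * r ^ (2 * n + 1) := by
    ext r; rw [div_pow, ← pow_mul]; ring
  rw [hintegrand, intervalIntegral.integral_const_mul, integral_pow, factorial_succ, div_pow,
    ← pow_mul]
  push_cast
  field_simp
  ring

section Bootstrap

variable {g : ℝ → ℝ} {a M : ℝ}

lemma le_pow_div_factorial_of_le_integral_mul_id (hg : Measurable g)
    (hg_nonneg : ∀ r ∈ Ioo 0 a, 0 ≤ g r) (hg_le : ∀ r ∈ Ioo 0 a, g r ≤ M)
    (hg_int : ∀ R ∈ Ioo 0 a, g R ≤ ∫ r in (0 : ℝ)..R, g r * r) (n : ℕ) :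
    ∀ R ∈ Ioo 0 a, g R ≤ M * (R ^ 2 / 2) ^ n / n ! := by
  induction n with
  | zero => simpa using hg_le
  | succ n ih =>
    intro R hR
    have hsub : Ioo 0 R ⊆ Ioo 0 a := Ioo_subset_Ioo_right hR.2.le
    have hbound_int : IntervalIntegrable (fun r => M * r) volume 0 R :=
      (continuous_const.mul continuous_id).intervalIntegrable 0 R
    have hg_mul_int : IntervalIntegrable (fun r => g r * r) volume 0 R := by
      refine hbound_int.mono_fun' (hg.mul measurable_id).aestronglyMeasurable ?_
      rw [uIoc_of_le hR.1.le, ← restrict_Ioo_eq_restrict_Ioc]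
      refine (ae_restrict_mem measurableSet_Ioo).mono fun r hr => ?_
      dsimp only
      rw [Real.norm_of_nonneg (mul_nonneg (hg_nonneg r (hsub hr)) hr.1.le)]
      exact mul_le_mul_of_nonneg_right (hg_le r (hsub hr)) hr.1.le
    calc g R ≤ ∫ r in (0 : ℝ)..R, g r * r := hg_int R hR
      _ ≤ ∫ r in (0 : ℝ)..R, M * (r ^ 2 / 2) ^ n / n ! * r := by
        refine intervalIntegral.integral_mono_on_of_le_Ioo hR.1.le hg_mul_int
          (Continuous.intervalIntegrable (by fun_prop) 0 R) fun r hr => ?_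
        exact mul_le_mul_of_nonneg_right (ih r (hsub hr)) hr.1.le
      _ = M * (R ^ 2 / 2) ^ (n + 1) / (n + 1)! :=
        integral_mul_sq_half_pow_div_factorial_mul_id M R n

lemma eq_zero_of_le_integral_mul_id (hg : Measurable g)
    (hg_nonneg : ∀ r ∈ Ioo 0 a, 0 ≤ g r) (hg_le : ∀ r ∈ Ioo 0 a, g r ≤ M)
    (hg_int : ∀ R ∈ Ioo 0 a, g R ≤ ∫ r in (0 : ℝ)..R, g r * r) :
    ∀ r ∈ Ioo 0 a, g r = 0 := by
  intro r hr
  have htendsto : Tendsto (fun n : ℕ => M * ((r ^ 2 / 2) ^ n / n !)) atTop (𝓝 0) := by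
    simpa using (FloorSemiring.tendsto_pow_div_factorial_atTop (r ^ 2 / 2)).const_mul M
  refine le_antisymm (ge_of_tendsto' htendsto fun n => ?_) (hg_nonneg r hr)
  rw [← mul_div_assoc]
  exact le_pow_div_factorial_of_le_integral_mul_id hg hg_nonneg hg_le hg_int n r hr

end Bootstrap

theorem stmt13_general (h : ℝ → ℝ)
    (C : ℝ)
    (hbd : ∀ r ∈ Ioo (0:ℝ) 1, |r * deriv h r| ≤ C)
    (hineq : ∀ R ∈ Ioo (0:ℝ) 1,
      R ^ 2 * (deriv h R) ^ 2 ≤ ∫ r in (0:ℝ)..R, (deriv h r) ^ 2 * r ^ 3) :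
    ∀ r ∈ Ioo (0:ℝ) 1, deriv h r = 0 := by
  have hg_nonneg : ∀ r ∈ Ioo (0 : ℝ) 1, 0 ≤ r ^ 2 * deriv h r ^ 2 := fun r _ => by positivity
  have hg_le : ∀ r ∈ Ioo (0 : ℝ) 1, r ^ 2 * deriv h r ^ 2 ≤ C ^ 2 := fun r hr => by
    rw [← mul_pow, ← sq_abs]
    exact pow_le_pow_left₀ (abs_nonneg _) (hbd r hr) 2
  have hg_int : ∀ R ∈ Ioo (0 : ℝ) 1,
      R ^ 2 * deriv h R ^ 2 ≤ ∫ r in (0 : ℝ)..R, r ^ 2 * deriv h r ^ 2 * r := fun R hR => by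
    convert hineq R hR using 3 with r
    ring
  have hg_zero := eq_zero_of_le_integral_mul_id (by fun_prop) hg_nonneg hg_le hg_int
  intro r hr
  simpa [hr.1.ne'] using hg_zero r hr

theorem stmt13 (h : ℝ → ℝ) (hC1 : ContDiffOn ℝ 1 h (Ioc 0 1))
    (C : ℝ) (hCpos : 0 < C)
    (hbd : ∀ r ∈ Ioo (0:ℝ) 1, |r * deriv h r| ≤ C)
    (hlim : Tendsto (fun r : ℝ => r * deriv h r) (nhdsWithin 0 (Ioi 0)) (nhds 0))
    (hineq : ∀ R ∈ Ioo (0:ℝ) 1,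
      R ^ 2 * (deriv h R) ^ 2 ≤ ∫ r in (0:ℝ)..R, (deriv h r) ^ 2 * r ^ 3) :
    ∀ r ∈ Ioo (0:ℝ) 1, deriv h r = 0 :=
  stmt13_general h C hbd hineq
end

section
/- Suppose w is a positive C² function on (0, r₀) with w'' + ((n-1)/r + r/2) w' + w/(p-1) + w^p = 0, n ≥ 2, p > 1. If w'(r₁) > 0 for some r₁ ∈ (0, r₀), then w'(r) ≥ w'(r₁) (r₁/r)^{n-1} for all r ∈ (0, r₁], and consequently w cannot extend to a positive solution on all of (0, r₀): the relation ∫_ρ^{r₁} w'(r) dr ≤ w(r₁) fails for small ρ when n ≥ 2. Hence a contradiction, i.e. w' ≤ 0. -/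
/-!
The radial flux `r ^ (n - 1) * w'` has derivative
`r ^ (n - 1) * (-(r / 2) * w' - w / (p - 1) - w ^ p)`, which is negative wherever `w' > 0`.
Hence if `w'(r₁) > 0`, the flux can never drop to zero when moving from `r₁` towards the origin,
and it only increases there: `r ^ (n - 1) * w'(r) ≥ r₁ ^ (n - 1) * w'(r₁)`.
For `n ≥ 2` this gives `w' ≥ K / r` near `0` with `K > 0`, so `w(r) ≤ C + K log r → -∞`,
contradicting `w > 0`.
-/

open Set Filter Topology

theorem le_of_deriv_nonpos_of_pos {f : ℝ → ℝ} {a b : ℝ} (hf : ContinuousOn f (Icc a b))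
    (hf' : DifferentiableOn ℝ f (Ioo a b)) (hderiv : ∀ x ∈ Ioo a b, 0 < f x → deriv f x ≤ 0)
    (hb : 0 < f b) {x : ℝ} (hx : x ∈ Icc a b) : f b ≤ f x := by
  have le_of_pos : ∀ c ∈ Icc a b, (∀ y ∈ Ioo c b, 0 < f y) → ∀ y ∈ Icc c b, f b ≤ f y := by
    intro c hc hpos y hy
    have hanti : AntitoneOn f (Icc c b) := by
      refine antitoneOn_of_deriv_nonpos (convex_Icc c b) (hf.mono (Icc_subset_Icc_left hc.1))
        ?_ fun z hz => ?_ <;> rw [interior_Icc] at *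
      · exact hf'.mono (Ioo_subset_Ioo_left hc.1)
      · exact hderiv z (Ioo_subset_Ioo_left hc.1 hz) (hpos z hz)
    exact hanti hy (right_mem_Icc.2 (hy.1.trans hy.2)) hy.2
  suffices hpos : ∀ y ∈ Icc a b, 0 < f y from
    le_of_pos a (left_mem_Icc.2 (hx.1.trans hx.2))
      (fun y hy => hpos y (Ioo_subset_Icc_self hy)) x hx
  -- Past `sSup T`, the last point where `f ≤ 0`, `f` is positive, hence antitone: `f (sSup T) ≥ f b`.
  by_contra! hneg
  set T := {y ∈ Icc a b | f y ≤ 0}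
  have hTbdd : BddAbove T := ⟨b, fun y hy => hy.1.2⟩
  have hc : sSup T ∈ T :=
    (hf.preimage_isClosed_of_isClosed isClosed_Icc isClosed_Iic).csSup_mem hneg hTbdd
  have hpos_right : ∀ y ∈ Ioo (sSup T) b, 0 < f y := fun y hy => lt_of_not_ge fun hy' =>
    (le_csSup hTbdd ⟨⟨hc.1.1.trans hy.1.le, hy.2.le⟩, hy'⟩).not_gt hy.1
  linarith [le_of_pos (sSup T) hc.1 hpos_right (sSup T) ⟨le_rfl, hc.1.2⟩, hc.2]

theorem tendsto_atBot_of_div_le_deriv {f : ℝ → ℝ} {K s : ℝ} (hK : 0 < K) (hs : 0 < s)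
    (hderiv : ∀ x ∈ Ioc 0 s, K / x ≤ deriv f x) : Tendsto f (𝓝[>] 0) atBot := by
  have hdiff : ∀ x ∈ Ioc 0 s, DifferentiableAt ℝ f x := fun x hx =>
    differentiableAt_of_deriv_ne_zero ((div_pos hK hx.1).trans_le (hderiv x hx)).ne'
  have hbound : ∀ x ∈ Ioc 0 s, f x ≤ f s - K * Real.log s + K * Real.log x := by
    intro x hx
    have hsub : Icc x s ⊆ Ioc 0 s := fun y hy => ⟨hx.1.trans_le hy.1, hy.2⟩
    have hD : ∀ y ∈ Ioc 0 s, HasDerivAt (fun y => f y - K * Real.log y) (deriv f y - K * y⁻¹) y :=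
      fun y hy => (hdiff y hy).hasDerivAt.sub ((Real.hasDerivAt_log hy.1.ne').const_mul K)
    have hmono : MonotoneOn (fun y => f y - K * Real.log y) (Icc x s) := by
      refine monotoneOn_of_deriv_nonneg (convex_Icc x s)
        (fun y hy => (hD y (hsub hy)).continuousAt.continuousWithinAt)
        (fun y hy => (hD y (hsub (interior_subset hy))).differentiableAt.differentiableWithinAt)
        fun y hy => ?_
      have hy' := hsub (interior_subset hy)
      rw [(hD y hy').deriv, sub_nonneg, ← div_eq_mul_inv]
      exact hderiv y hy'
    linarith [hmono (left_mem_Icc.2 hx.2) (right_mem_Icc.2 hx.2) hx.2]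
  refine tendsto_atBot_mono' _ ?_ (tendsto_atBot_add_const_left _ (f s - K * Real.log s)
    (Real.tendsto_log_nhdsGT_zero.const_mul_atBot hK))
  filter_upwards [Ioc_mem_nhdsGT hs] using hbound

noncomputable def radialFlux (n : ℕ) (w : ℝ → ℝ) (r : ℝ) : ℝ := r ^ (n - 1) * deriv w r

theorem deriv_radialFlux_nonpos {n : ℕ} (hn : 1 ≤ n) {p : ℝ} (hp : 1 < p) {w : ℝ → ℝ} {r : ℝ}
    (hr : 0 < r) (hw : 0 < w r) (hw' : 0 ≤ deriv w r) (hdiff : DifferentiableAt ℝ (deriv w) r)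
    (heq : deriv (deriv w) r + (((n : ℝ) - 1) / r + r / 2) * deriv w r
      + w r / (p - 1) + w r ^ p = 0) :
    deriv (radialFlux n w) r ≤ 0 := by
  obtain ⟨m, rfl⟩ : ∃ m, n = m + 1 := ⟨n - 1, by omega⟩
  have hD : HasDerivAt (radialFlux (m + 1) w)
      (m * r ^ (m - 1) * deriv w r + r ^ m * deriv (deriv w) r) r :=
    (hasDerivAt_pow m r).fun_mul hdiff.hasDerivAt
  have hpow : r * (m * r ^ (m - 1)) = m * r ^ m := by
    cases m <;> simp [pow_succ]; ring
  have hw'' : r * deriv (deriv w) r =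
      -(m + r ^ 2 / 2) * deriv w r - r * (w r / (p - 1) + w r ^ p) := by
    have hcoef : (((m + 1 : ℕ) : ℝ) - 1) / r * r = m := by push_cast; field_simp; ring
    linear_combination r * heq - deriv w r * hcoef
  rw [hD.deriv]
  refine nonpos_of_mul_nonpos_left ?_ hr
  calc (m * r ^ (m - 1) * deriv w r + r ^ m * deriv (deriv w) r) * r
      = r ^ m * (-(r ^ 2 / 2) * deriv w r - r * (w r / (p - 1) + w r ^ p)) := by
        linear_combination deriv w r * hpow + r ^ m * hw''
    _ ≤ 0 := by
      have := div_pos hw (sub_pos.2 hp)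
      have := Real.rpow_pos_of_pos hw p
      exact mul_nonpos_of_nonneg_of_nonpos (by positivity) (by nlinarith)

theorem radialFlux_le_of_deriv_pos {n : ℕ} (hn : 1 ≤ n) {p r₀ : ℝ} (hp : 1 < p) {w : ℝ → ℝ}
    (hpos : ∀ r ∈ Ioo 0 r₀, 0 < w r) (hdiff : ∀ r ∈ Ioo 0 r₀, DifferentiableAt ℝ (deriv w) r)
    (heq : ∀ r ∈ Ioo 0 r₀, deriv (deriv w) r + (((n : ℝ) - 1) / r + r / 2) * deriv w r
      + w r / (p - 1) + w r ^ p = 0)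
    {r₁ : ℝ} (hr₁ : r₁ ∈ Ioo 0 r₀) (h : 0 < deriv w r₁) {r : ℝ} (hr : r ∈ Ioc 0 r₁) :
    radialFlux n w r₁ ≤ radialFlux n w r := by
  have hsub : Icc r r₁ ⊆ Ioo 0 r₀ := fun x hx => ⟨hr.1.trans_le hx.1, hx.2.trans_lt hr₁.2⟩
  have hflux : ∀ x ∈ Ioo 0 r₀, DifferentiableAt ℝ (radialFlux n w) x := fun x hx =>
    (differentiableAt_pow _).mul (hdiff x hx)
  refine le_of_deriv_nonpos_of_pos
    (fun x hx => (hflux x (hsub hx)).continuousAt.continuousWithinAt)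
    (fun x hx => (hflux x (hsub (Ioo_subset_Icc_self hx))).differentiableWithinAt)
    (fun x hx hfx => ?_) (mul_pos (pow_pos hr₁.1 _) h) ⟨le_rfl, hr.2⟩
  have hx := hsub (Ioo_subset_Icc_self hx)
  exact deriv_radialFlux_nonpos hn hp hx.1 (hpos x hx)
    (pos_of_mul_pos_right hfx (pow_pos hx.1 _).le).le (hdiff x hx) (heq x hx)

theorem stmt15 (n : ℕ) (hn : 2 ≤ n) (p : ℝ) (hp : 1 < p) (r₀ : ℝ) (hr₀ : 0 < r₀)
    (w : ℝ → ℝ) (hpos : ∀ r ∈ Ioo (0:ℝ) r₀, 0 < w r)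
    (hC2 : ContDiffOn ℝ 2 w (Ioo 0 r₀))
    (heq : ∀ r ∈ Ioo (0:ℝ) r₀, deriv (deriv w) r + (((n : ℝ) - 1) / r + r / 2) * deriv w r
      + w r / (p - 1) + w r ^ p = 0) :
    (∀ r₁ ∈ Ioo (0:ℝ) r₀, 0 < deriv w r₁ →
      ∀ r ∈ Ioc (0:ℝ) r₁, deriv w r₁ * (r₁ / r) ^ (n - 1) ≤ deriv w r) ∧
    ∀ r ∈ Ioo (0:ℝ) r₀, deriv w r ≤ 0 := by
  have hdiff : ∀ r ∈ Ioo 0 r₀, DifferentiableAt ℝ (deriv w) r := fun r hr =>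
    ((hC2.deriv_of_isOpen (m := 1) isOpen_Ioo (by norm_num)).differentiableOn
      one_ne_zero).differentiableAt (isOpen_Ioo.mem_nhds hr)
  have hflux {r₁ r : ℝ} (hr₁ : r₁ ∈ Ioo 0 r₀) (h : 0 < deriv w r₁) (hr : r ∈ Ioc 0 r₁) :
      r₁ ^ (n - 1) * deriv w r₁ ≤ r ^ (n - 1) * deriv w r :=
    radialFlux_le_of_deriv_pos (by omega) hp hpos hdiff heq hr₁ h hr
  refine ⟨fun r₁ hr₁ h r hr => ?_, fun r₁ hr₁ => ?_⟩
  · rw [div_pow, mul_div_assoc', div_le_iff₀ (pow_pos hr.1 _)]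
    linarith [hflux hr₁ h hr]
  · by_contra! h
    set K := r₁ ^ (n - 1) * deriv w r₁
    have hK : 0 < K := mul_pos (pow_pos hr₁.1 _) h
    have hbound : ∀ x ∈ Ioc 0 (min r₁ 1), K / x ≤ deriv w x := fun x hx => calc
      K / x ≤ K / x ^ (n - 1) := div_le_div_of_nonneg_left hK.le (pow_pos hx.1 _)
          (pow_le_of_le_one hx.1.le (hx.2.trans (min_le_right _ _)) (by omega))
      _ ≤ deriv w x := by
        rw [div_le_iff₀ (pow_pos hx.1 _), mul_comm]
        exact hflux hr₁ h ⟨hx.1, hx.2.trans (min_le_left _ _)⟩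
    obtain ⟨ρ, hρw, hρ⟩ := (((tendsto_atBot_of_div_le_deriv hK (lt_min hr₁.1 one_pos)
      hbound).eventually (eventually_le_atBot 0)).and (Ioo_mem_nhdsGT hr₀)).exists
    exact (hpos ρ hρ).not_ge hρw
end
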